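/- Let D be a field and R1, R2 normal domains containing D with T = R1⊗_D R2 a normal domain. If a_i is a finitely generated rank-1 reflexive R_i-module for i=1,2, then a1⊗_D a2 is a reflexive T-module, and in Cl(T) one has [a1⊗_{R1}T] + [T⊗_{R2}a2] = [a1⊗_D a2]. -/

import Mathlib

/-!
STATEMENT 17: Let `D` be a field and `R1, R2` normal domains containing `D` with
`T = R1 ⊗[D] R2` a normal domain.  If `a_i` is a finitely generated rank-1 reflexive
`R_i`-module (`i = 1, 2`), then `a1 ⊗[D] a2` is a reflexive `T`-module and
`[T ⊗[R1] a1] + [T ⊗[R2] a2] = [a1 ⊗[D] a2]` in `Cl(T)`, i.e. the double dual of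
`(T ⊗[R1] a1) ⊗[T] (T ⊗[R2] a2)` is isomorphic to `a1 ⊗[D] a2`.
-/

open TensorProduct
universe u

/-- `a` represents an element of the divisor class group: it is a finitely generated
reflexive module of rank 1. -/
def IsDivisorial (R : Type u) [CommRing R] [IsDomain R] (a : Type u) [AddCommGroup a]
    [Module R a] : Prop :=
  Module.Finite R a ∧ Module.IsReflexive R a ∧
    Module.rank (FractionRing R) (FractionRing R ⊗[R] a) = 1

section
variable (D R1 R2 : Type u) [CommRing D] [CommRing R1] [CommRing R2]
  [Algebra D R1] [Algebra D R2]
variable (M1 M2 : Type u) [AddCommGroup M1] [AddCommGroup M2]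
  [Module D M1] [Module R1 M1] [IsScalarTower D R1 M1]
  [Module D M2] [Module R2 M2] [IsScalarTower D R2 M2]

/-- The action of `R2` on `M1 ⊗[D] M2` through the second factor. -/
noncomputable def mod2 : Module R2 (M1 ⊗[D] M2) :=
  letI : SMul R2 (M1 ⊗[D] M2) :=
    ⟨fun r x => (TensorProduct.comm D M1 M2).symm (r • TensorProduct.comm D M1 M2 x)⟩
  Function.Injective.module R2 (TensorProduct.comm D M1 M2).toLinearMap.toAddMonoidHom
    (TensorProduct.comm D M1 M2).injective
    (fun _ _ => (TensorProduct.comm D M1 M2).apply_symm_apply _)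

/-- The natural `T = R1 ⊗[D] R2`-module structure on `M1 ⊗[D] M2`. -/
noncomputable def modT : Module (R1 ⊗[D] R2) (M1 ⊗[D] M2) := by
  letI := mod2 D R2 M1 M2
  have key : ∀ (r : R2) (m : M1) (n : M2), r • (m ⊗ₜ[D] n) = m ⊗ₜ[D] (r • n) := by
    intro r m n
    show (TensorProduct.comm D M1 M2).symm (r • TensorProduct.comm D M1 M2 (m ⊗ₜ[D] n)) = _
    rw [TensorProduct.comm_tmul, TensorProduct.smul_tmul', TensorProduct.comm_symm_tmul]
  letI : IsScalarTower D R2 (M1 ⊗[D] M2) := by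
    constructor
    intro d r x
    induction x using TensorProduct.induction_on with
    | zero => simp
    | tmul m n => rw [key, key, smul_assoc, TensorProduct.tmul_smul]
    | add a b ha hb => simp only [smul_add, ha, hb]
  letI : SMulCommClass R1 R2 (M1 ⊗[D] M2) := by
    constructor
    intro r1 r2 x
    induction x using TensorProduct.induction_on with
    | zero => simp
    | tmul m n => rw [key, TensorProduct.smul_tmul', TensorProduct.smul_tmul', key]
    | add a b ha hb => simp only [smul_add, ha, hb]
  exact TensorProduct.Algebra.module

end


/-!
Over the field `D` every module is free, so for `M` finitely generated over `R` the natural map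
`Hom_R(M, N) ⊗_D V → Hom_R(M, N ⊗_D V)` is bijective. Applying this once on each side and
currying gives the Künneth isomorphism `Hom(M1, R1) ⊗_D Hom(M2, R2) ≅ Hom_T(M1 ⊗_D M2, T)`,
which is `T`-linear. Applied to `M_i` and to their duals (finitely generated since `R_i` is
noetherian), it identifies the biduality map of `M1 ⊗_D M2` with the tensor product of the
biduality maps of `M1` and `M2`; hence `M1 ⊗_D M2` is reflexive when both `M_i` are.
The class-group identity then comes from the `T`-linear isomorphism
`M1 ⊗_D M2 ≅ (T ⊗_{R1} M1) ⊗_T (T ⊗_{R2} M2)`, `x ⊗ y ↦ (1 ⊗ x) ⊗ (1 ⊗ y)`.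
-/

section HomTensor

variable (D R M N V : Type*) [CommRing D] [CommRing R] [Algebra D R]
  [AddCommGroup M] [Module R M] [AddCommGroup N] [Module R N] [Module D N] [IsScalarTower D R N]
  [AddCommGroup V] [Module D V]

noncomputable def rTensorHomToHomRTensor' : (M →ₗ[R] N) ⊗[D] V →ₗ[D] (M →ₗ[R] N ⊗[D] V) :=
  TensorProduct.lift <| LinearMap.mk₂ D
    (fun f v => ((AlgebraTensorModule.mk D R N V).flip v).comp f)
    (fun _ _ _ => by ext; simp [add_tmul])
    (fun _ _ _ => by ext; simp [smul_tmul'])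
    (fun _ _ _ => by ext; simp)
    (fun _ _ _ => by ext; simp)

variable {D R M N V}

@[simp] lemma rTensorHomToHomRTensor'_tmul (f : M →ₗ[R] N) (v : V) (x : M) :
    rTensorHomToHomRTensor' D R M N V (f ⊗ₜ v) x = f x ⊗ₜ v := rfl

theorem rTensorHomToHomRTensor'_bijective [Module.Free D V] [Module.Finite R M] :
    Function.Bijective (rTensorHomToHomRTensor' D R M N V) := by
  let b := Module.Free.chooseBasis D V
  let ι := Module.Free.ChooseBasisIndex D V
  let eHom := TensorProduct.congr (LinearEquiv.refl D (M →ₗ[R] N)) b.repr ≪≫ₗ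
    finsuppScalarRight D D (M →ₗ[R] N) ι
  let eN := AlgebraTensorModule.congr (LinearEquiv.refl R N) b.repr ≪≫ₗ
    finsuppScalarRight D R N ι
  have h : ⇑(rTensorHomToHomRTensor' D R M N V) =
      (LinearEquiv.congrRight eN).symm ∘ LinearMap.finsuppLinearMap D ∘ eHom := by
    ext z : 1
    rw [Function.comp_apply, Function.comp_apply, LinearEquiv.eq_symm_apply]
    ext x i
    induction z using TensorProduct.induction_on with
    | zero => simp
    | tmul f v => simp [eN, eHom, LinearEquiv.congrRight]
    | add z z' hz hz' => simp_all
  rw [h]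
  exact (LinearEquiv.bijective _).comp
    ((LinearMap.finsuppLinearMap_bijective_of_moduleFinite _ _ _ _ _).comp (LinearEquiv.bijective _))

end HomTensor

section LTensorDual

variable {D R1 R2 : Type*} [CommRing D] [CommRing R1] [CommRing R2] [Algebra D R1] [Algebra D R2]
  {M2 : Type*} [AddCommGroup M2] [Module R2 M2]

attribute [local instance] Algebra.TensorProduct.rightAlgebra

variable (D R1 R2) in
noncomputable def rightAlgebraComm : R2 ⊗[D] R1 ≃ₗ[R2] R1 ⊗[D] R2 :=
  { Algebra.TensorProduct.comm D R2 R1 with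
    map_smul' := fun s w => by
      simp only [Algebra.smul_def, AlgEquiv.toEquiv_eq_coe, Equiv.toFun_as_coe,
        EquivLike.coe_coe, map_mul, RingHom.id_apply]
      rfl }

variable (D R1 R2 M2) in
noncomputable def lTensorDualToHomLTensor :
    R1 ⊗[D] Module.Dual R2 M2 →ₗ[R1] (M2 →ₗ[R2] R1 ⊗[D] R2) :=
  AlgebraTensorModule.lift <| LinearMap.mk₂' R1 D
    (fun r g =>
      { toFun := fun y => r ⊗ₜ g y
        map_add' := fun _ _ => by rw [map_add, tmul_add]
        map_smul' := fun s y => by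
          rw [map_smul, smul_eq_mul, RingHom.id_apply, Algebra.smul_def,
            Algebra.TensorProduct.right_algebraMap_apply, Algebra.TensorProduct.tmul_mul_tmul,
            one_mul] })
    (fun _ _ _ => by ext; simp [add_tmul])
    (fun _ _ _ => by ext; simp [smul_tmul'])
    (fun _ _ _ => by ext; simp [tmul_add])
    (fun _ _ _ => by ext; simp [tmul_smul])

theorem lTensorDualToHomLTensor_bijective [Module.Free D R1] [Module.Finite R2 M2] :
    Function.Bijective (lTensorDualToHomLTensor D R1 R2 M2) := by
  have h : ⇑(lTensorDualToHomLTensor D R1 R2 M2) =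
      LinearEquiv.congrRight (rightAlgebraComm D R1 R2) ∘
        rTensorHomToHomRTensor' D R2 M2 R2 R1 ∘ TensorProduct.comm D R1 (Module.Dual R2 M2) := by
    ext w y : 2
    induction w using TensorProduct.induction_on with
    | zero => simp
    | tmul r g => rfl
    | add w w' hw hw' => simp_all
  rw [h]
  exact (LinearEquiv.bijective _).comp
    (rTensorHomToHomRTensor'_bijective.comp (LinearEquiv.bijective _))

end LTensorDual

section ModT

variable {D R1 R2 : Type u} [CommRing D] [CommRing R1] [CommRing R2] [Algebra D R1] [Algebra D R2]
  {M1 M2 : Type u} [AddCommGroup M1] [AddCommGroup M2]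
  [Module D M1] [Module R1 M1] [IsScalarTower D R1 M1]
  [Module D M2] [Module R2 M2] [IsScalarTower D R2 M2]

attribute [local instance] modT

lemma modT_smul_tmul (r1 : R1) (r2 : R2) (x : M1) (y : M2) :
    (r1 ⊗ₜ[D] r2) • (x ⊗ₜ[D] y) = (r1 • x) ⊗ₜ[D] (r2 • y) := rfl

lemma modT_linearMap_ext {P : Type*} [AddCommGroup P] [Module (R1 ⊗[D] R2) P]
    {F G : M1 ⊗[D] M2 →ₗ[R1 ⊗[D] R2] P} (h : ∀ x y, F (x ⊗ₜ y) = G (x ⊗ₜ y)) : F = G :=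
  LinearMap.ext fun z => z.induction_on (by simp only [map_zero]) h
    fun _ _ hz hz' => by rw [map_add, map_add, hz, hz']

noncomputable def modTLinearMap {P : Type*} [AddCommGroup P] [Module (R1 ⊗[D] R2) P]
    (F : M1 ⊗[D] M2 →+ P)
    (hF : ∀ (r1 : R1) (r2 : R2) x y, F ((r1 • x) ⊗ₜ (r2 • y)) = (r1 ⊗ₜ[D] r2) • F (x ⊗ₜ y)) :
    M1 ⊗[D] M2 →ₗ[R1 ⊗[D] R2] P where
  toFun := F
  map_add' := map_add F
  map_smul' t z := by
    rw [RingHom.id_apply]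
    induction t using TensorProduct.induction_on with
    | zero => rw [zero_smul, zero_smul, map_zero]
    | add s s' hs hs' => rw [add_smul, map_add, hs, hs', add_smul]
    | tmul r1 r2 =>
      induction z using TensorProduct.induction_on with
      | zero => rw [smul_zero, map_zero, smul_zero]
      | tmul x y => exact hF r1 r2 x y
      | add z z' hz hz' => rw [smul_add, map_add, map_add, hz, hz', smul_add]

variable (D) in
noncomputable def dualTmul (f : Module.Dual R1 M1) (g : Module.Dual R2 M2) :
    Module.Dual (R1 ⊗[D] R2) (M1 ⊗[D] M2) :=
  modTLinearMap (TensorProduct.map (f.restrictScalars D) (g.restrictScalars D))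
    fun r1 r2 x y => by simp [Algebra.TensorProduct.tmul_mul_tmul]

@[simp] lemma dualTmul_tmul (f : Module.Dual R1 M1) (g : Module.Dual R2 M2) (x : M1) (y : M2) :
    dualTmul D f g (x ⊗ₜ y) = f x ⊗ₜ g y := rfl

variable (D R1 R2 M1 M2) in
noncomputable def kunnethDualMap :
    Module.Dual R1 M1 ⊗[D] Module.Dual R2 M2 →ₗ[R1 ⊗[D] R2]
      Module.Dual (R1 ⊗[D] R2) (M1 ⊗[D] M2) :=
  modTLinearMap (TensorProduct.lift <| LinearMap.mk₂ D (dualTmul D)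
    (fun _ _ _ => modT_linearMap_ext fun _ _ => add_tmul _ _ _)
    (fun _ _ _ => modT_linearMap_ext fun _ _ => (smul_tmul' _ _ _).symm)
    (fun _ _ _ => modT_linearMap_ext fun _ _ => tmul_add _ _ _)
    (fun _ _ _ => modT_linearMap_ext fun _ _ => tmul_smul _ _ _)).toAddMonoidHom
    fun r1 r2 f g => modT_linearMap_ext fun x y => by
      simp [Algebra.TensorProduct.tmul_mul_tmul]

section RightAlgebra

attribute [local instance] Algebra.TensorProduct.rightAlgebra

lemma tmul_mul_eq_smul_smul (r1 : R1) (r2 : R2) (t : R1 ⊗[D] R2) :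
    (r1 ⊗ₜ[D] r2) * t = r1 • r2 • t := by
  rw [Algebra.smul_def, Algebra.smul_def, ← mul_assoc]
  simp [Algebra.TensorProduct.right_algebraMap_apply]

variable (M1 M2) in
noncomputable def dualTensorCurryEquiv :
    Module.Dual (R1 ⊗[D] R2) (M1 ⊗[D] M2) ≃ (M1 →ₗ[R1] M2 →ₗ[R2] R1 ⊗[D] R2) where
  toFun h := LinearMap.mk₂' R1 R2 (fun x y => h (x ⊗ₜ y))
    (fun _ _ _ => by rw [add_tmul, map_add])
    (fun r x y => by
      rw [← one_smul R2 y, ← modT_smul_tmul, map_smul, one_smul, smul_eq_mul, Algebra.smul_def]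
      rfl)
    (fun _ _ _ => by rw [tmul_add, map_add])
    (fun s x y => by
      rw [← one_smul R1 x, ← modT_smul_tmul, map_smul, one_smul, smul_eq_mul, Algebra.smul_def]
      rfl)
  invFun φ := modTLinearMap (TensorProduct.lift (LinearMap.mk₂ D (fun x y => φ x y)
      (fun _ _ _ => by simp) (fun _ _ _ => by simp) (fun _ _ _ => by simp)
      (fun _ _ _ => by simp))).toAddMonoidHom
    fun r1 r2 x y => by simp [tmul_mul_eq_smul_smul, smul_comm r1 r2]
  left_inv h := modT_linearMap_ext fun _ _ => rfl
  right_inv φ := by ext; rfl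

lemma kunnethDualMap_apply_tmul (z : Module.Dual R1 M1 ⊗[D] Module.Dual R2 M2) (x : M1) (y : M2) :
    kunnethDualMap D R1 R2 M1 M2 z (x ⊗ₜ y) =
      lTensorDualToHomLTensor D R1 R2 M2 (rTensorHomToHomRTensor' D R1 M1 R1 _ z x) y := by
  induction z using TensorProduct.induction_on with
  | zero => simp
  | tmul f g => rfl
  | add z z' hz hz' => simp [hz, hz']

end RightAlgebra

end ModT

theorem Module.Finite.dual_of_isNoetherianRing (R M : Type*) [CommRing R] [IsNoetherianRing R]
    [AddCommGroup M] [Module R M] [Module.Finite R M] : Module.Finite R (Module.Dual R M) := by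
  obtain ⟨n, f, hf⟩ := Module.Finite.exists_fin' R M
  exact Module.Finite.of_injective f.dualMap (LinearMap.dualMap_injective_of_surjective hf)

section Reflexive

variable {D R1 R2 : Type u} [Field D] [CommRing R1] [CommRing R2] [Algebra D R1] [Algebra D R2]
  {M1 M2 : Type u} [AddCommGroup M1] [AddCommGroup M2]
  [Module D M1] [Module R1 M1] [IsScalarTower D R1 M1]
  [Module D M2] [Module R2 M2] [IsScalarTower D R2 M2]

attribute [local instance] modT Algebra.TensorProduct.rightAlgebra

theorem kunnethDualMap_bijective [Module.Finite R1 M1] [Module.Finite R2 M2] :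
    Function.Bijective (kunnethDualMap D R1 R2 M1 M2) := by
  let β := LinearEquiv.ofBijective (lTensorDualToHomLTensor D R1 R2 M2)
    lTensorDualToHomLTensor_bijective
  have h : ⇑(kunnethDualMap D R1 R2 M1 M2) = (dualTensorCurryEquiv M1 M2).symm ∘
      LinearEquiv.congrRight β ∘ rTensorHomToHomRTensor' D R1 M1 R1 (Module.Dual R2 M2) := by
    ext z : 1
    rw [Function.comp_apply, Function.comp_apply, Equiv.eq_symm_apply]
    refine LinearMap.ext fun x => LinearMap.ext fun y => ?_
    exact kunnethDualMap_apply_tmul z x y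
  rw [h]
  exact (Equiv.bijective _).comp ((LinearEquiv.bijective _).comp rTensorHomToHomRTensor'_bijective)

theorem isReflexive_tensorProduct [IsNoetherianRing R1] [IsNoetherianRing R2]
    [Module.Finite R1 M1] [Module.Finite R2 M2]
    [Module.IsReflexive R1 M1] [Module.IsReflexive R2 M2] :
    Module.IsReflexive (R1 ⊗[D] R2) (M1 ⊗[D] M2) := by
  have := Module.Finite.dual_of_isNoetherianRing R1 M1
  have := Module.Finite.dual_of_isNoetherianRing R2 M2
  let κ := LinearEquiv.ofBijective (kunnethDualMap D R1 R2 M1 M2) kunnethDualMap_bijective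
  let κ' := LinearEquiv.ofBijective
    (kunnethDualMap D R1 R2 (Module.Dual R1 M1) (Module.Dual R2 M2)) kunnethDualMap_bijective
  let ev := TensorProduct.congr ((Module.evalEquiv R1 M1).restrictScalars D)
    ((Module.evalEquiv R2 M2).restrictScalars D)
  have h : κ.dualMap ∘ Module.Dual.eval (R1 ⊗[D] R2) (M1 ⊗[D] M2) = κ' ∘ ev := by
    ext z : 1
    refine modT_linearMap_ext fun f g => ?_
    induction z using TensorProduct.induction_on with
    | zero => simp
    | tmul x y => rfl
    | add z z' hz hz' => simp_all
  refine ⟨?_⟩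
  rw [← EquivLike.comp_bijective _ κ.dualMap, h]
  exact κ'.bijective.comp ev.bijective

end Reflexive

section BaseChange

variable {D R1 R2 : Type u} [CommRing D] [CommRing R1] [CommRing R2] [Algebra D R1] [Algebra D R2]
  {M1 M2 : Type u} [AddCommGroup M1] [AddCommGroup M2]
  [Module D M1] [Module R1 M1] [IsScalarTower D R1 M1]
  [Module D M2] [Module R2 M2] [IsScalarTower D R2 M2]

attribute [local instance] modT Algebra.TensorProduct.rightAlgebra

local instance : IsScalarTower R1 (R1 ⊗[D] R2) (M1 ⊗[D] M2) where
  smul_assoc r t z := by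
    induction t using TensorProduct.induction_on with
    | zero => rw [smul_zero, zero_smul, smul_zero]
    | add t t' ht ht' => rw [smul_add, add_smul, add_smul, ht, ht', smul_add]
    | tmul r1 r2 =>
      induction z using TensorProduct.induction_on with
      | zero => rw [smul_zero, smul_zero, smul_zero]
      | add z z' hz hz' => rw [smul_add, smul_add, smul_add, hz, hz']
      | tmul x y => rw [smul_tmul', modT_smul_tmul, modT_smul_tmul, smul_tmul', smul_assoc]

variable (D R1 R2 M1 M2) in
noncomputable def tensorOfBaseChange :
    ((R1 ⊗[D] R2) ⊗[R1] M1) ⊗[R1 ⊗[D] R2] ((R1 ⊗[D] R2) ⊗[R2] M2) →ₗ[R1 ⊗[D] R2] M1 ⊗[D] M2 :=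
  -- `R2` acts through `T`: as an instance, `mod2` would also yield a second `D`-action (`R2 := D`)
  letI : Module R2 ((R1 ⊗[D] R2) ⊗[R1] M1 →ₗ[R1 ⊗[D] R2] M1 ⊗[D] M2) :=
    Module.compHom _ (algebraMap R2 (R1 ⊗[D] R2))
  haveI : IsScalarTower R2 (R1 ⊗[D] R2) ((R1 ⊗[D] R2) ⊗[R1] M1 →ₗ[R1 ⊗[D] R2] M1 ⊗[D] M2) :=
    IsScalarTower.of_algebraMap_smul fun _ _ => rfl
  TensorProduct.lift <| LinearMap.flip <| LinearMap.liftBaseChange (R1 ⊗[D] R2)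
    { toFun := fun y => ((AlgebraTensorModule.mk D R1 M1 M2).flip y).liftBaseChange (R1 ⊗[D] R2)
      map_add' := fun y y' => AlgebraTensorModule.ext fun t x => by simp
      map_smul' := fun r2 y => AlgebraTensorModule.ext fun t x => by
        change t • (x ⊗ₜ[D] (r2 • y)) = ((1 : R1) ⊗ₜ[D] r2) • t • (x ⊗ₜ[D] y)
        rw [smul_comm _ t, modT_smul_tmul, one_smul] }

@[simp] lemma tensorOfBaseChange_tmul (t s : R1 ⊗[D] R2) (x : M1) (y : M2) :
    tensorOfBaseChange D R1 R2 M1 M2 ((t ⊗ₜ[R1] x) ⊗ₜ (s ⊗ₜ[R2] y)) = s • t • (x ⊗ₜ y) := rfl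

variable (D R1 R2 M1 M2) in
noncomputable def tensorToBaseChange :
    M1 ⊗[D] M2 →ₗ[R1 ⊗[D] R2] ((R1 ⊗[D] R2) ⊗[R1] M1) ⊗[R1 ⊗[D] R2] ((R1 ⊗[D] R2) ⊗[R2] M2) :=
  modTLinearMap (P := ((R1 ⊗[D] R2) ⊗[R1] M1) ⊗[R1 ⊗[D] R2] ((R1 ⊗[D] R2) ⊗[R2] M2))
    (TensorProduct.lift <| LinearMap.mk₂ D
    (fun x y => ((1 : R1 ⊗[D] R2) ⊗ₜ[R1] x) ⊗ₜ ((1 : R1 ⊗[D] R2) ⊗ₜ[R2] y))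
    (fun _ _ _ => by simp [tmul_add, add_tmul])
    (fun _ _ _ => by simp [smul_tmul'])
    (fun _ _ _ => by simp [tmul_add])
    (fun _ _ _ => by simp [tmul_smul])).toAddMonoidHom
    fun r1 r2 x y => by
      change ((1 : R1 ⊗[D] R2) ⊗ₜ[R1] (r1 • x)) ⊗ₜ ((1 : R1 ⊗[D] R2) ⊗ₜ[R2] (r2 • y)) =
        (r1 ⊗ₜ[D] r2) • (((1 : R1 ⊗[D] R2) ⊗ₜ[R1] x) ⊗ₜ ((1 : R1 ⊗[D] R2) ⊗ₜ[R2] y))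
      rw [tmul_smul, tmul_smul, ← algebraMap_smul (R1 ⊗[D] R2) r1,
        ← algebraMap_smul (R1 ⊗[D] R2) r2, smul_tmul_smul, Algebra.TensorProduct.algebraMap_apply,
        Algebra.TensorProduct.right_algebraMap_apply, Algebra.TensorProduct.tmul_mul_tmul,
        mul_one, one_mul]
      rfl

@[simp] lemma tensorToBaseChange_tmul (x : M1) (y : M2) :
    tensorToBaseChange D R1 R2 M1 M2 (x ⊗ₜ y) =
      ((1 : R1 ⊗[D] R2) ⊗ₜ[R1] x) ⊗ₜ ((1 : R1 ⊗[D] R2) ⊗ₜ[R2] y) := rfl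

variable (D R1 R2 M1 M2) in
noncomputable def tensorEquivBaseChange :
    M1 ⊗[D] M2 ≃ₗ[R1 ⊗[D] R2]
      ((R1 ⊗[D] R2) ⊗[R1] M1) ⊗[R1 ⊗[D] R2] ((R1 ⊗[D] R2) ⊗[R2] M2) :=
  LinearEquiv.ofLinearMap (tensorToBaseChange D R1 R2 M1 M2) (tensorOfBaseChange D R1 R2 M1 M2)
    (TensorProduct.ext' fun p q => by
      induction p using TensorProduct.induction_on with
      | zero => simp
      | add p p' hp hp' => simp_all [add_tmul]
      | tmul t x =>
        induction q using TensorProduct.induction_on with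
        | zero => simp
        | add q q' hq hq' => simp_all [tmul_add]
        | tmul s y =>
          simp only [LinearMap.comp_apply, tensorOfBaseChange_tmul, map_smul,
            tensorToBaseChange_tmul, LinearMap.id_apply, smul_tmul', smul_eq_mul, mul_one]
          rw [← smul_eq_mul, ← smul_tmul', TensorProduct.smul_tmul, smul_tmul', smul_eq_mul,
            mul_one])
    (modT_linearMap_ext fun x y => by simp)

end BaseChange

theorem statement17_general (D R1 R2 : Type u) [Field D]
    [CommRing R1] [CommRing R2] [IsDomain R1] [IsDomain R2]
    [IsNoetherianRing R1] [IsNoetherianRing R2] [Algebra D R1] [Algebra D R2]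
    (a1 a2 : Type u) [AddCommGroup a1] [Module R1 a1] [AddCommGroup a2] [Module R2 a2]
    (ha1 : IsDivisorial R1 a1) (ha2 : IsDivisorial R2 a2) :
    letI : Algebra R2 (R1 ⊗[D] R2) := Algebra.TensorProduct.rightAlgebra
    letI : Module D a1 := Module.compHom a1 (algebraMap D R1)
    letI : Module D a2 := Module.compHom a2 (algebraMap D R2)
    letI : IsScalarTower D R1 a1 := IsScalarTower.of_algebraMap_smul fun _ _ => rfl
    letI : IsScalarTower D R2 a2 := IsScalarTower.of_algebraMap_smul fun _ _ => rfl
    letI : Module (R1 ⊗[D] R2) (a1 ⊗[D] a2) := modT D R1 R2 a1 a2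
    -- `a1 ⊗[D] a2` is a reflexive `T`-module :
    Module.IsReflexive (R1 ⊗[D] R2) (a1 ⊗[D] a2) ∧
    -- `[T ⊗[R1] a1] + [T ⊗[R2] a2] = [a1 ⊗[D] a2]` in `Cl(T)` :
    Nonempty (Module.Dual (R1 ⊗[D] R2) (Module.Dual (R1 ⊗[D] R2)
        (((R1 ⊗[D] R2) ⊗[R1] a1) ⊗[R1 ⊗[D] R2] ((R1 ⊗[D] R2) ⊗[R2] a2)))
      ≃ₗ[R1 ⊗[D] R2] (a1 ⊗[D] a2)) := by
  let _ : Algebra R2 (R1 ⊗[D] R2) := Algebra.TensorProduct.rightAlgebra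
  let _ : Module D a1 := Module.compHom a1 (algebraMap D R1)
  let _ : Module D a2 := Module.compHom a2 (algebraMap D R2)
  let _ : IsScalarTower D R1 a1 := IsScalarTower.of_algebraMap_smul fun _ _ => rfl
  let _ : IsScalarTower D R2 a2 := IsScalarTower.of_algebraMap_smul fun _ _ => rfl
  let _ : Module (R1 ⊗[D] R2) (a1 ⊗[D] a2) := modT D R1 R2 a1 a2
  obtain ⟨_, _, -⟩ := ha1
  obtain ⟨_, _, -⟩ := ha2
  have : Module.IsReflexive (R1 ⊗[D] R2) (a1 ⊗[D] a2) := isReflexive_tensorProduct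
  exact ⟨this, ⟨(tensorEquivBaseChange D R1 R2 a1 a2).dualMap.dualMap.symm ≪≫ₗ
    (Module.evalEquiv (R1 ⊗[D] R2) (a1 ⊗[D] a2)).symm⟩⟩

theorem statement17 (D R1 R2 : Type u) [Field D]
    [CommRing R1] [CommRing R2] [IsDomain R1] [IsDomain R2]
    [IsIntegrallyClosed R1] [IsIntegrallyClosed R2]
    [IsNoetherianRing R1] [IsNoetherianRing R2] [Algebra D R1] [Algebra D R2]
    [IsDomain (R1 ⊗[D] R2)] [IsIntegrallyClosed (R1 ⊗[D] R2)]
    [IsNoetherianRing (R1 ⊗[D] R2)]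
    (a1 a2 : Type u) [AddCommGroup a1] [Module R1 a1] [AddCommGroup a2] [Module R2 a2]
    (ha1 : IsDivisorial R1 a1) (ha2 : IsDivisorial R2 a2) :
    letI : Algebra R2 (R1 ⊗[D] R2) := Algebra.TensorProduct.rightAlgebra
    letI : Module D a1 := Module.compHom a1 (algebraMap D R1)
    letI : Module D a2 := Module.compHom a2 (algebraMap D R2)
    letI : IsScalarTower D R1 a1 := IsScalarTower.of_algebraMap_smul fun _ _ => rfl
    letI : IsScalarTower D R2 a2 := IsScalarTower.of_algebraMap_smul fun _ _ => rfl
    letI : Module (R1 ⊗[D] R2) (a1 ⊗[D] a2) := modT D R1 R2 a1 a2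
    -- `a1 ⊗[D] a2` is a reflexive `T`-module :
    Module.IsReflexive (R1 ⊗[D] R2) (a1 ⊗[D] a2) ∧
    -- `[T ⊗[R1] a1] + [T ⊗[R2] a2] = [a1 ⊗[D] a2]` in `Cl(T)` :
    Nonempty (Module.Dual (R1 ⊗[D] R2) (Module.Dual (R1 ⊗[D] R2)
        (((R1 ⊗[D] R2) ⊗[R1] a1) ⊗[R1 ⊗[D] R2] ((R1 ⊗[D] R2) ⊗[R2] a2)))
      ≃ₗ[R1 ⊗[D] R2] (a1 ⊗[D] a2)) :=
  statement17_general D R1 R2 a1 a2 ha1 ha2
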